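/- Suppose EA_p(z_1; z_2,…,z_n) = z_2 with z_1,…,z_n pairwise distinct finite complex numbers none of which is a root of p. Then the partial derivative ∂EA_p(z_1; z_2,…,z_n)/∂z_2 evaluated at this point equals -1. -/

import Mathlib

/-- `q(x) = p(x)/∏_j (x - w j)` where `p(x) = ∏_j (x - α j)` is monic of degree
`m + 1` and `w` lists the companion coordinates `z₂, …, z_n` (`n = m + 1`). -/
noncomputable def eaQ (m : ℕ) (α : Fin (m + 1) → ℂ) (w : Fin m → ℂ) : ℂ → ℂ :=
  fun x => (∏ j, (x - α j)) / ∏ j, (x - w j)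

/-- The Ehrlich–Aberth step `EA_p(z₁; w) = z₁ - q(z₁)/q'(z₁)`. -/
noncomputable def eaStep (m : ℕ) (α : Fin (m + 1) → ℂ) (z₁ : ℂ) (w : Fin m → ℂ) : ℂ :=
  z₁ - eaQ m α w z₁ / deriv (eaQ m α w) z₁

/-!
Write `1/(z₁ - EA) = C - 1/(z₁ - z₂)`, where `C` does not depend on `z₂`. As a function of
`t = z₂`, `EA = z₁ - (C - (z₁ - t)⁻¹)⁻¹` has derivative `-(z₁ - t)⁻² (C - (z₁ - t)⁻¹)⁻²`,
and the fixed-point condition `EA = t` says exactly `(C - (z₁ - t)⁻¹)⁻¹ = z₁ - t`, so the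
two factors cancel to `-1`.
-/

open Finset

section Derivatives

variable {𝕜 : Type*} [NontriviallyNormedField 𝕜]

theorem hasDerivAt_prod_sub {ι : Type*} [Fintype ι] (c : ι → 𝕜) {z : 𝕜}
    (hc : ∀ j, z - c j ≠ 0) :
    HasDerivAt (fun x => ∏ j, (x - c j)) ((∏ j, (z - c j)) * ∑ j, (z - c j)⁻¹) z := by
  classical
  refine (HasDerivAt.fun_finsetProd (u := univ) (f' := fun _ => (1 : 𝕜))
    (fun i _ => (hasDerivAt_id z).sub_const (c i))).congr_deriv ?_
  rw [mul_sum]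
  refine sum_congr rfl fun i _ => ?_
  rw [smul_eq_mul, mul_one, ← prod_erase_mul univ _ (mem_univ i), mul_assoc,
    mul_inv_cancel₀ (hc i), mul_one]
  rfl

theorem hasDerivAt_sub_inv_sub_inv (C z : 𝕜) {t : 𝕜} (ht : z - t ≠ 0)
    (hD : C - (z - t)⁻¹ ≠ 0) :
    HasDerivAt (fun s => z - (C - (z - s)⁻¹)⁻¹)
      (-((z - t) ^ 2 * (C - (z - t)⁻¹) ^ 2)⁻¹) t := by
  have hsub : HasDerivAt (fun s => z - s) (-1) t := by
    simpa using (hasDerivAt_id t).const_sub z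
  refine ((((hsub.inv ht).const_sub C).inv hD).const_sub z).congr_deriv ?_
  simp only [Pi.inv_apply]
  field_simp

theorem deriv_sub_inv_sub_inv_of_fixed {C z t : 𝕜} (ht : z ≠ t)
    (hfix : z - (C - (z - t)⁻¹)⁻¹ = t) :
    deriv (fun s => z - (C - (z - s)⁻¹)⁻¹) t = -1 := by
  have hzt : z - t ≠ 0 := sub_ne_zero.2 ht
  have hinv : (C - (z - t)⁻¹)⁻¹ = z - t := by linear_combination -hfix
  have hD : C - (z - t)⁻¹ ≠ 0 := by
    rintro h
    rw [h, inv_zero] at hinv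
    exact hzt hinv.symm
  rw [(hasDerivAt_sub_inv_sub_inv C z hzt hD).deriv, mul_inv, ← inv_pow (C - (z - t)⁻¹), hinv,
    inv_mul_cancel₀ (pow_ne_zero 2 hzt)]

end Derivatives

section EhrlichAberth

variable {m : ℕ} {α : Fin (m + 1) → ℂ} {z₁ : ℂ} {w : Fin m → ℂ}

theorem hasDerivAt_eaQ (hα : ∀ j, z₁ ≠ α j) (hw : ∀ j, z₁ ≠ w j) :
    HasDerivAt (eaQ m α w)
      (eaQ m α w z₁ * (∑ j, (z₁ - α j)⁻¹ - ∑ j, (z₁ - w j)⁻¹)) z₁ := by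
  have hα' : ∀ j, z₁ - α j ≠ 0 := fun j => sub_ne_zero.2 (hα j)
  have hw' : ∀ j, z₁ - w j ≠ 0 := fun j => sub_ne_zero.2 (hw j)
  have hQ : ∏ j, (z₁ - w j) ≠ 0 := prod_ne_zero_iff.2 fun j _ => hw' j
  refine ((hasDerivAt_prod_sub α hα').div (hasDerivAt_prod_sub w hw') hQ).congr_deriv ?_
  rw [eaQ]
  field_simp

-- Also when the bracket vanishes: then `q'(z₁) = 0` and both sides are `z₁`, by `x / 0 = 0`.
theorem eaStep_eq (hα : ∀ j, z₁ ≠ α j) (hw : ∀ j, z₁ ≠ w j) :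
    eaStep m α z₁ w = z₁ - (∑ j, (z₁ - α j)⁻¹ - ∑ j, (z₁ - w j)⁻¹)⁻¹ := by
  have hq : eaQ m α w z₁ ≠ 0 :=
    div_ne_zero (prod_ne_zero_iff.2 fun j _ => sub_ne_zero.2 (hα j))
      (prod_ne_zero_iff.2 fun j _ => sub_ne_zero.2 (hw j))
  rw [eaStep, (hasDerivAt_eaQ hα hw).deriv, div_mul_cancel_left₀ hq]

theorem eaStep_update_eq (hα : ∀ j, z₁ ≠ α j) (hw : ∀ j, z₁ ≠ w j) (i : Fin m) {t : ℂ}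
    (ht : z₁ ≠ t) :
    eaStep m α z₁ (Function.update w i t) =
      z₁ - ((∑ j, (z₁ - α j)⁻¹ - ∑ j ∈ univ \ {i}, (z₁ - w j)⁻¹) - (z₁ - t)⁻¹)⁻¹ := by
  have hw' : ∀ j, z₁ ≠ Function.update w i t j := by
    intro j
    rcases eq_or_ne j i with rfl | hj
    · rwa [Function.update_self]
    · rw [Function.update_of_ne hj]
      exact hw j
  have hsum : ∑ j, (z₁ - Function.update w i t j)⁻¹ =
      (z₁ - t)⁻¹ + ∑ j ∈ univ \ {i}, (z₁ - w j)⁻¹ := by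
    simp only [Function.apply_update (fun _ x => (z₁ - x)⁻¹)]
    exact sum_update_of_mem (mem_univ i) _ _
  rw [eaStep_eq hα hw', hsum, sub_add_eq_sub_sub_swap]

end EhrlichAberth

theorem stmt13_general (m : ℕ) (hm : 0 < m) (α : Fin (m + 1) → ℂ) (z₁ : ℂ) (w : Fin m → ℂ)
    (hz₁w : ∀ j, z₁ ≠ w j)
    (hz₁ : ∀ j, z₁ ≠ α j)
    (hEA : eaStep m α z₁ w = w ⟨0, hm⟩) :
    deriv (fun t => eaStep m α z₁ (Function.update w ⟨0, hm⟩ t)) (w ⟨0, hm⟩) = -1 := by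
  set i : Fin m := ⟨0, hm⟩
  have hstep := fun t (ht : z₁ ≠ t) => eaStep_update_eq hz₁ hz₁w i ht
  have hlocal : (fun t => eaStep m α z₁ (Function.update w i t)) =ᶠ[nhds (w i)]
      fun t => z₁ - ((∑ j, (z₁ - α j)⁻¹ - ∑ j ∈ univ \ {i}, (z₁ - w j)⁻¹) - (z₁ - t)⁻¹)⁻¹ :=
    (eventually_ne_nhds (hz₁w i).symm).mono fun t ht => hstep t ht.symm
  rw [hlocal.deriv_eq]
  refine deriv_sub_inv_sub_inv_of_fixed (hz₁w i) ?_
  rw [← hstep _ (hz₁w i), Function.update_eq_self, hEA]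

/-- If `EA_p(z₁; z₂,…,z_n) = z₂` with `z₁,…,z_n` pairwise distinct finite complex
numbers, none of which is a root of `p`, then `∂EA_p(z₁; z₂,…,z_n)/∂z₂ = -1`
at this point. -/
theorem stmt13 (m : ℕ) (hm : 0 < m) (α : Fin (m + 1) → ℂ) (z₁ : ℂ) (w : Fin m → ℂ)
    (hw : Function.Injective w) (hz₁w : ∀ j, z₁ ≠ w j)
    (hz₁ : ∀ j, z₁ ≠ α j) (hwα : ∀ i j, w i ≠ α j)
    (hEA : eaStep m α z₁ w = w ⟨0, hm⟩) :
    deriv (fun t => eaStep m α z₁ (Function.update w ⟨0, hm⟩ t)) (w ⟨0, hm⟩) = -1 :=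
  stmt13_general m hm α z₁ w hz₁w hz₁ hEA
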